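/- Let V be a finite-dimensional real inner product space, φ an alternating p-form of comass one on V, and X ⊆ V a nonempty open set. Then the following are equivalent: (1) for every nonempty compact set K ⊆ X the hull K̂ is a compact subset of X; (2) there exists a C^∞ φ-plurisubharmonic function f : X → ℝ which is a proper exhaustion of X, i.e. for every c ∈ ℝ the set {x ∈ X : f(x) ≤ c} is compact. (Theorem 4.3, Euclidean case) -/

import Mathlib

open scoped RealInnerProductSpace

noncomputable section

variable {V : Type*} [NormedAddCommGroup V] [InnerProductSpace ℝ V] [FiniteDimensional ℝ V]

/-- `f` is `φ`-plurisubharmonic on `U`: `Σ_j D²f(x)(e_j,e_j) ≥ 0` for every `x ∈ U` and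
every `φ`-plane `(e₁,…,e_p)` (an orthonormal `p`-tuple with `φ(e₁,…,e_p) = 1`). -/
def IsPSH {p : ℕ} (φ : V [⋀^Fin p]→ₗ[ℝ] ℝ) (U : Set V) (f : V → ℝ) : Prop :=
  ∀ x ∈ U, ∀ e : Fin p → V, Orthonormal ℝ e → φ e = 1 →
    0 ≤ ∑ j, iteratedFDeriv ℝ 2 f x ![e j, e j]

/-- The `(X,φ)`-convex hull of `K`:
`K̂ = {x ∈ X : f(x) ≤ sup_K f for all f ∈ PSH(X,φ)}`, where `PSH(X,φ)` is the set of
smooth `φ`-plurisubharmonic functions on `X`. -/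
def pshHull {p : ℕ} (φ : V [⋀^Fin p]→ₗ[ℝ] ℝ) (X K : Set V) : Set V :=
  {x ∈ X | ∀ f : V → ℝ, ContDiffOn ℝ (⊤ : ℕ∞) f X → IsPSH φ X f → f x ≤ sSup (f '' K)}

/-!
If `f` is a PSH exhaustion of `X`, the hull of `K` lies in the compact sublevel set
`{f ≤ sup_K f}` and is closed in it. Conversely, if hulls are compact one chooses compact sets
`M 0 ⊆ M 1 ⊆ ⋯` exhausting `X` with `M n ∪ K̂(M n) ⊆ int M (n + 1)`. A point `y` off the hull of
`M j` is separated by some PSH `g` with `g y > sup_{M j} g`, and `a * ramp (g - sup_{M j} g)` is a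
nonnegative PSH function vanishing on `M j` and large at `y`, because `ramp` is smooth, convex and
nondecreasing and vanishes exactly on `(-∞, 0]`. Summing finitely many of these (the shell
`M (j + 2) \ int M (j + 1)` is compact and avoids the hull) gives `ψ j ≥ j` on that shell, and the
locally finite sum `∑ j, ψ j` is the exhaustion.
-/

open Filter Set Topology

def ramp (t : ℝ) : ℝ := ∫ u in (0 : ℝ)..t, expNegInvGlue u

theorem hasDerivAt_ramp (t : ℝ) : HasDerivAt ramp (expNegInvGlue t) t :=
  ((expNegInvGlue.contDiff (n := 0)).continuous.integral_hasStrictDerivAt 0 t).hasDerivAt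

theorem contDiff_ramp {n : ℕ∞} : ContDiff ℝ n ramp := by
  refine (contDiff_infty_iff_deriv.2 ⟨fun t => (hasDerivAt_ramp t).differentiableAt, ?_⟩).of_le
    (WithTop.coe_le_coe.2 le_top)
  rw [show deriv ramp = expNegInvGlue from funext fun t => (hasDerivAt_ramp t).deriv]
  exact expNegInvGlue.contDiff

theorem monotone_ramp : Monotone ramp :=
  monotone_of_deriv_nonneg (fun t => (hasDerivAt_ramp t).differentiableAt) fun t =>
    (hasDerivAt_ramp t).deriv ▸ expNegInvGlue.nonneg t

theorem ramp_eq_zero_of_nonpos {t : ℝ} (ht : t ≤ 0) : ramp t = 0 := by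
  rw [ramp, intervalIntegral.integral_congr (g := fun _ => (0 : ℝ)), intervalIntegral.integral_zero]
  intro u hu
  rw [uIcc_of_ge ht] at hu
  exact expNegInvGlue.zero_of_nonpos hu.2

theorem ramp_pos {t : ℝ} (ht : 0 < t) : 0 < ramp t :=
  intervalIntegral.intervalIntegral_pos_of_pos_on
    ((expNegInvGlue.contDiff (n := 0)).continuous.intervalIntegrable 0 t)
    (fun _ hu => expNegInvGlue.pos_of_pos hu.1) ht

theorem ramp_nonneg (t : ℝ) : 0 ≤ ramp t := by
  rcases le_or_gt t 0 with ht | ht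
  exacts [(ramp_eq_zero_of_nonpos ht).ge, (ramp_pos ht).le]

theorem iteratedFDeriv_two_comp_real_apply {E : Type*} [NormedAddCommGroup E] [NormedSpace ℝ E]
    {g : E → ℝ} {σ : ℝ → ℝ} {x : E} (hg : ContDiffAt ℝ 2 g x) (hσ : ContDiff ℝ 2 σ) (v : E) :
    iteratedFDeriv ℝ 2 (fun z => σ (g z)) x ![v, v] =
      deriv (deriv σ) (g x) * fderiv ℝ g x v ^ 2
        + deriv σ (g x) * iteratedFDeriv ℝ 2 g x ![v, v] := by
  obtain ⟨hσd, -, hσ'⟩ := contDiff_succ_iff_deriv.1 (show ContDiff ℝ (1 + 1) σ from hσ)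
  have hfderiv : fderiv ℝ (fun z => σ (g z)) =ᶠ[𝓝 x] fun y => deriv σ (g y) • fderiv ℝ g y := by
    filter_upwards [hg.eventually (by simp)] with y hy
    exact ((hσd (g y)).hasDerivAt.comp_hasFDerivAt y
      (hy.differentiableAt (by simp)).hasFDerivAt).fderiv
  have hderiv_comp : HasFDerivAt (fun y => deriv σ (g y))
      (deriv (deriv σ) (g x) • fderiv ℝ g x) x :=
    ((hσ'.differentiable one_ne_zero (g x)).hasDerivAt).comp_hasFDerivAt x
      (hg.differentiableAt (by simp)).hasFDerivAt
  have hfderiv_g : HasFDerivAt (fderiv ℝ g) (fderiv ℝ (fderiv ℝ g) x) x :=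
    ((hg.fderiv_right (m := 1) le_rfl).differentiableAt one_ne_zero).hasFDerivAt
  rw [iteratedFDeriv_two_apply, hfderiv.fderiv_eq,
    HasFDerivAt.fderiv (f := fun y => deriv σ (g y) • fderiv ℝ g y) (hderiv_comp.smul hfderiv_g),
    iteratedFDeriv_two_apply g]
  simp only [Matrix.cons_val_zero, Matrix.cons_val_one, add_apply,
    ContinuousLinearMap.smulRight_apply, smul_apply, smul_eq_mul]
  ring

theorem IsOpen.exists_isCompact_cover {T : Type*} [TopologicalSpace T] [LocallyCompactSpace T]
    [SecondCountableTopology T] {X : Set T} (hX : IsOpen X) :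
    ∃ B : ℕ → Set T, (∀ n, IsCompact (B n)) ∧ (∀ n, B n ⊆ X) ∧ ∀ x ∈ X, ∃ n, x ∈ B n := by
  have := hX.locallyCompactSpace
  let K := CompactExhaustion.choice X
  refine ⟨fun n => (↑) '' K n, fun n => (K.isCompact n).image continuous_subtype_val,
    fun n => by rintro _ ⟨x, -, rfl⟩; exact x.2, fun x hx => ?_⟩
  obtain ⟨n, hn⟩ := K.exists_mem ⟨x, hx⟩
  exact ⟨n, _, hn, rfl⟩

theorem isCompact_sublevel_of_nat_le_on_shell {T : Type*} [TopologicalSpace T] [T2Space T]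
    {X : Set T} {M : ℕ → Set T} {f : T → ℝ} (hMc : ∀ n, IsCompact (M n)) (hMX : ∀ n, M n ⊆ X)
    (hM : Monotone M) (hcov : ∀ x ∈ X, ∃ n, x ∈ M n) (hf : ContinuousOn f X)
    (hshell : ∀ j : ℕ, ∀ x ∈ M (j + 2) \ interior (M (j + 1)), (j : ℝ) ≤ f x) (c : ℝ) :
    IsCompact {x ∈ X | f x ≤ c} := by
  classical
  set N := ⌈c⌉₊ + 2
  have hsub : {x ∈ X | f x ≤ c} ⊆ M N := by
    rintro x ⟨hxX, hxc⟩
    by_contra hxN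
    -- `x` lies in the shell of index `m - 2`, where `m` is the first index with `x ∈ M m`
    set m := Nat.find (hcov x hxX)
    have hNm : N < m := lt_of_not_ge fun h => hxN (hM h (Nat.find_spec (hcov x hxX)))
    have hm : m - 2 + 2 = m := Nat.sub_add_cancel (by omega)
    have hfx := hshell (m - 2) x ⟨by rw [hm]; exact Nat.find_spec (hcov x hxX),
      fun h => Nat.find_min (hcov x hxX) (by omega : m - 2 + 1 < m) (interior_subset h)⟩
    have hmc : (⌈c⌉₊ : ℝ) + 1 ≤ (m - 2 : ℕ) := by exact_mod_cast (by omega : ⌈c⌉₊ + 1 ≤ m - 2)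
    linarith [Nat.le_ceil c]
  have hsublevel : {x ∈ X | f x ≤ c} = M N ∩ f ⁻¹' Iic c :=
    ext fun x => ⟨fun hx => ⟨hsub hx, hx.2⟩, fun hx => ⟨hMX N hx.1, hx.2⟩⟩
  rw [hsublevel]
  exact (hMc N).of_isClosed_subset ((hf.mono (hMX N)).preimage_isClosed_of_isClosed
    (hMc N).isClosed isClosed_Iic) inter_subset_left

section PSH

variable {E : Type*} [NormedAddCommGroup E] [InnerProductSpace ℝ E] {p : ℕ}
  {φ : E [⋀^Fin p]→ₗ[ℝ] ℝ} {X : Set E}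

theorem isPSH_const (c : ℝ) : IsPSH φ X fun _ => c := by
  intro x _ e _ _
  simp [iteratedFDeriv_const_of_ne two_ne_zero]

theorem isPSH_of_forall_eventuallyEq {f : E → ℝ}
    (h : ∀ x ∈ X, ∃ g, IsPSH φ X g ∧ f =ᶠ[𝓝 x] g) : IsPSH φ X f := by
  intro x hx e he hφe
  obtain ⟨g, hg, hfg⟩ := h x hx
  rw [(hfg.iteratedFDeriv ℝ 2).eq_of_nhds]
  exact hg x hx e he hφe

theorem isPSH_finset_sum {ι : Type*} (hXo : IsOpen X) (s : Finset ι) {g : ι → E → ℝ}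
    (hgs : ∀ i ∈ s, ContDiffOn ℝ 2 (g i) X) (hgp : ∀ i ∈ s, IsPSH φ X (g i)) :
    IsPSH φ X fun z => ∑ i ∈ s, g i z := by
  intro x hx e he hφe
  rw [iteratedFDeriv_fun_sum_apply fun i hi => (hgs i hi).contDiffAt (hXo.mem_nhds hx)]
  simp only [sum_apply]
  rw [Finset.sum_comm]
  exact Finset.sum_nonneg fun i hi => hgp i hi x hx e he hφe

theorem IsPSH.comp_of_monotone_of_monotone_deriv (hXo : IsOpen X) {g : E → ℝ}
    (hgs : ContDiffOn ℝ 2 g X) (hgp : IsPSH φ X g) {σ : ℝ → ℝ} (hσ : ContDiff ℝ 2 σ)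
    (hσm : Monotone σ) (hσ'm : Monotone (deriv σ)) : IsPSH φ X fun z => σ (g z) := by
  intro x hx e he hφe
  simp only [iteratedFDeriv_two_comp_real_apply (hgs.contDiffAt (hXo.mem_nhds hx)) hσ,
    Finset.sum_add_distrib, ← Finset.mul_sum]
  exact add_nonneg (mul_nonneg hσ'm.deriv_nonneg (Finset.sum_nonneg fun j _ => sq_nonneg _))
    (mul_nonneg hσm.deriv_nonneg (hgp x hx e he hφe))

theorem pshHull_empty : pshHull φ X ∅ = ∅ :=
  eq_empty_of_forall_notMem fun _ hx => by
    have h := hx.2 (fun _ => (1 : ℝ)) contDiffOn_const (isPSH_const 1)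
    norm_num at h

theorem isCompact_pshHull_of_subset {K S : Set E} (hS : IsCompact S) (hSX : S ⊆ X)
    (hKS : pshHull φ X K ⊆ S) : IsCompact (pshHull φ X K) := by
  have hull_eq : pshHull φ X K = S ∩ ⋂ g : {g : E → ℝ // ContDiffOn ℝ (⊤ : ℕ∞) g X ∧ IsPSH φ X g},
      S ∩ g.1 ⁻¹' Iic (sSup (g.1 '' K)) := by
    ext x
    simp only [mem_inter_iff, mem_iInter, mem_preimage, mem_Iic]
    exact ⟨fun hx => ⟨hKS hx, fun g => ⟨hKS hx, hx.2 g.1 g.2.1 g.2.2⟩⟩,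
      fun hx => ⟨hSX hx.1, fun g hgs hgp => (hx.2 ⟨g, hgs, hgp⟩).2⟩⟩
  rw [hull_eq]
  exact hS.inter_right (isClosed_iInter fun g =>
    (g.2.1.continuousOn.mono hSX).preimage_isClosed_of_isClosed hS.isClosed isClosed_Iic)

theorem exists_psh_nonneg_of_notMem_pshHull (hXo : IsOpen X) {K : Set E} (hK : IsCompact K)
    (hKX : K ⊆ X) {y : E} (hyX : y ∈ X) (hy : y ∉ pshHull φ X K) (c : ℝ) :
    ∃ ψ : E → ℝ, ContDiffOn ℝ (⊤ : ℕ∞) ψ X ∧ IsPSH φ X ψ ∧ (∀ z, 0 ≤ ψ z) ∧ EqOn ψ 0 K ∧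
      c < ψ y := by
  obtain ⟨g, hgs, hgp, hgy⟩ : ∃ g : E → ℝ, ContDiffOn ℝ (⊤ : ℕ∞) g X ∧ IsPSH φ X g ∧
      sSup (g '' K) < g y := by
    simpa [pshHull, hyX] using hy
  set m := sSup (g '' K)
  have hgK : ∀ z ∈ K, g z ≤ m := fun z hz =>
    le_csSup (hK.image_of_continuousOn (hgs.continuousOn.mono hKX)).bddAbove
      (mem_image_of_mem g hz)
  have hry : 0 < ramp (g y - m) := ramp_pos (sub_pos.2 hgy)
  set a := (|c| + 1) / ramp (g y - m)
  have ha : 0 ≤ a := div_nonneg (by positivity) hry.le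
  set σ : ℝ → ℝ := fun t => a * ramp (t - m)
  have hσ : ContDiff ℝ (⊤ : ℕ∞) σ :=
    contDiff_const.mul (contDiff_ramp.comp (contDiff_id.sub contDiff_const))
  have hσ' : deriv σ = fun t => a * expNegInvGlue (t - m) := funext fun t =>
    (((hasDerivAt_ramp (t - m)).comp_sub_const t m).const_mul a).deriv
  refine ⟨fun z => σ (g z), hσ.comp_contDiffOn hgs, ?_, fun z => mul_nonneg ha (ramp_nonneg _),
    fun z hz => ?_, ?_⟩
  · refine hgp.comp_of_monotone_of_monotone_deriv hXo (hgs.of_le (WithTop.coe_le_coe.2 le_top))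
      (hσ.of_le (WithTop.coe_le_coe.2 le_top))
      (fun s t hst => mul_le_mul_of_nonneg_left (monotone_ramp (sub_le_sub_right hst m)) ha) ?_
    rw [hσ']
    exact fun s t hst =>
      mul_le_mul_of_nonneg_left (expNegInvGlue.monotone (sub_le_sub_right hst m)) ha
  · simp [σ, ramp_eq_zero_of_nonpos (sub_nonpos.2 (hgK z hz))]
  · calc c < |c| + 1 := by linarith [le_abs_self c]
      _ = σ (g y) := (div_mul_cancel₀ _ hry.ne').symm

theorem exists_psh_nonneg_of_disjoint_pshHull (hXo : IsOpen X) {K A : Set E} (hK : IsCompact K)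
    (hKX : K ⊆ X) (hA : IsCompact A) (hAX : A ⊆ X) (hAK : Disjoint A (pshHull φ X K)) (c : ℝ) :
    ∃ ψ : E → ℝ, ContDiffOn ℝ (⊤ : ℕ∞) ψ X ∧ IsPSH φ X ψ ∧ (∀ z, 0 ≤ ψ z) ∧ EqOn ψ 0 K ∧
      ∀ z ∈ A, c ≤ ψ z := by
  choose! ψ hψs hψp hψ0 hψK hψy using fun y (hy : y ∈ A) =>
    exists_psh_nonneg_of_notMem_pshHull hXo hK hKX (hAX hy) (disjoint_left.1 hAK hy) c
  obtain ⟨t, htA, hAt⟩ := hA.elim_nhds_subcover (fun y => {z | c < ψ y z}) fun y hy =>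
    ((hψs y hy).continuousOn.continuousAt (hXo.mem_nhds (hAX hy))).preimage_mem_nhds
      (Ioi_mem_nhds (hψy y hy))
  refine ⟨fun z => ∑ y ∈ t, ψ y z, ContDiffOn.sum fun y hy => hψs y (htA y hy),
    isPSH_finset_sum hXo t (fun y hy => (hψs y (htA y hy)).of_le (WithTop.coe_le_coe.2 le_top))
      fun y hy => hψp y (htA y hy),
    fun z => Finset.sum_nonneg fun y hy => hψ0 y (htA y hy) z,
    fun z hz => Finset.sum_eq_zero fun y hy => hψK y (htA y hy) hz, fun z hz => ?_⟩
  obtain ⟨y, hyt, hyz⟩ := mem_iUnion₂.1 (hAt hz)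
  exact hyz.le.trans (Finset.single_le_sum (fun y' hy' => hψ0 y' (htA y' hy') z) hyt)

theorem exists_isCompact_seq_pshHull_subset_interior [FiniteDimensional ℝ E] (hXo : IsOpen X)
    (hHull : ∀ K ⊆ X, IsCompact K → IsCompact (pshHull φ X K)) :
    ∃ M : ℕ → Set E, (∀ n, IsCompact (M n)) ∧ (∀ n, M n ⊆ X) ∧
      (∀ n, M n ∪ pshHull φ X (M n) ⊆ interior (M (n + 1))) ∧ ∀ x ∈ X, ∃ n, x ∈ M n := by
  obtain ⟨B, hBc, hBX, hBcov⟩ := hXo.exists_isCompact_cover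
  have step (n : ℕ) (K : Set E) (hK : IsCompact K) (hKX : K ⊆ X) :
      ∃ L, IsCompact L ∧ L ⊆ X ∧ K ∪ pshHull φ X K ∪ B n ⊆ interior L := by
    obtain ⟨L, hL, hKL, hLX⟩ := exists_compact_between ((hK.union (hHull K hKX hK)).union (hBc n))
      hXo (union_subset (union_subset hKX fun _ hx => hx.1) (hBX n))
    exact ⟨L, hL, hLX, hKL⟩
  choose! next hnext_c hnext_X hnext_int using step
  let M : ℕ → Set E := fun n => Nat.rec ∅ next n
  have hM : ∀ n, IsCompact (M n) ∧ M n ⊆ X := by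
    intro n
    induction n with
    | zero => exact ⟨isCompact_empty, empty_subset X⟩
    | succ n ih => exact ⟨hnext_c n _ ih.1 ih.2, hnext_X n _ ih.1 ih.2⟩
  refine ⟨M, fun n => (hM n).1, fun n => (hM n).2,
    fun n => subset_union_left.trans (hnext_int n _ (hM n).1 (hM n).2), fun x hx => ?_⟩
  obtain ⟨n, hn⟩ := hBcov x hx
  exact ⟨n + 1, interior_subset (hnext_int n _ (hM n).1 (hM n).2 (Or.inr hn))⟩

theorem exists_psh_exhaustion_of_isCompact_pshHull [FiniteDimensional ℝ E] (hXo : IsOpen X)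
    (hHull : ∀ K ⊆ X, IsCompact K → IsCompact (pshHull φ X K)) :
    ∃ f : E → ℝ, ContDiffOn ℝ (⊤ : ℕ∞) f X ∧ IsPSH φ X f ∧
      ∀ c : ℝ, IsCompact {x ∈ X | f x ≤ c} := by
  obtain ⟨M, hMc, hMX, hMint, hcov⟩ := exists_isCompact_seq_pshHull_subset_interior hXo hHull
  have hM : Monotone M := monotone_nat_of_le_succ fun n =>
    (subset_union_left.trans (hMint n)).trans interior_subset
  choose ψ hψs hψp hψ0 hψM hψshell using fun j : ℕ =>
    exists_psh_nonneg_of_disjoint_pshHull hXo (hMc j) (hMX j)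
      ((hMc (j + 2)).diff isOpen_interior) (sdiff_subset.trans (hMX _))
      (disjoint_left.2 fun _ hy hyh => hy.2 (hMint j (Or.inr hyh))) (j : ℝ)
  have hsum (m : ℕ) (z : E) (hz : z ∈ M m) : ∑' j, ψ j z = ∑ j ∈ Finset.range m, ψ j z :=
    tsum_eq_sum fun j hj => hψM j (hM (by simpa using hj) hz)
  have hloc : ∀ x ∈ X, ∃ m, (fun z => ∑' j, ψ j z) =ᶠ[𝓝 x] fun z => ∑ j ∈ Finset.range m, ψ j z :=
    fun x hx => let ⟨n, hn⟩ := hcov x hx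
    ⟨n + 1, eventually_of_mem (isOpen_interior.mem_nhds (hMint n (Or.inl hn)))
      fun z hz => hsum _ z (interior_subset hz)⟩
  have hfs : ContDiffOn ℝ (⊤ : ℕ∞) (fun z => ∑' j, ψ j z) X := fun x hx =>
    let ⟨_, hm⟩ := hloc x hx
    (((ContDiffOn.sum fun j _ => hψs j).contDiffAt (hXo.mem_nhds hx)).congr_of_eventuallyEq
      hm).contDiffWithinAt
  refine ⟨_, hfs, isPSH_of_forall_eventuallyEq fun x hx => ?_,
    isCompact_sublevel_of_nat_le_on_shell hMc hMX hM hcov hfs.continuousOn fun j x hx => ?_⟩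
  · obtain ⟨m, hm⟩ := hloc x hx
    exact ⟨_, isPSH_finset_sum hXo _ (fun j _ => (hψs j).of_le (WithTop.coe_le_coe.2 le_top))
      fun j _ => hψp j, hm⟩
  · rw [hsum (j + 2) x hx.1]
    exact (hψshell j x hx).trans (Finset.single_le_sum (fun i _ => hψ0 i x) (by simp))

end PSH

theorem phiConvex_iff_exists_psh_exhaustion {p : ℕ}
    (φ : V [⋀^Fin p]→ₗ[ℝ] ℝ)
    (X : Set V) (hXo : IsOpen X) :
    (∀ K : Set V, K ⊆ X → K.Nonempty → IsCompact K → IsCompact (pshHull φ X K)) ↔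
      ∃ f : V → ℝ, ContDiffOn ℝ (⊤ : ℕ∞) f X ∧ IsPSH φ X f ∧
        ∀ c : ℝ, IsCompact {x ∈ X | f x ≤ c} := by
  refine ⟨fun hHull => exists_psh_exhaustion_of_isCompact_pshHull hXo fun K hKX hK => ?_, ?_⟩
  · rcases K.eq_empty_or_nonempty with rfl | hKne
    · simp [pshHull_empty]
    · exact hHull K hKX hKne hK
  · rintro ⟨f, hfs, hfp, hf⟩ K - - -
    exact isCompact_pshHull_of_subset (hf (sSup (f '' K))) (fun _ hx => hx.1)
      fun x hx => ⟨hx.1, hx.2 f hfs hfp⟩
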